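/- arXiv:2001.10435 — 2 statements merged into one kernel-verified Lean document; each statement's English description precedes it below -/
import Mathlib

section
/- Let a be a word with Lyndon factorization a = p₁^{n₁} ⋯ p_s^{n_s} where p₁ < ⋯ < p_s are Lyndon words of lengths l₁,...,l_s, and let w be an (l₁,...,l₁,l₂,...,l_s)-shuffle permutation (each block repeated nᵢ times) of the positions of a. Then the word obtained by applying w to the letters of a is lexicographically greater than or equal to a. -/
/-- Lexicographic strict order on words, with the convention that a word is
strictly greater than each of its proper prefixes (i.e. `a ++ b < a`). -/
def wlt {X : Type*} [LinearOrder X] : List X → List X → Prop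
  | [], _ => False
  | _ :: _, [] => True
  | x :: xs, y :: ys => x < y ∨ (x = y ∧ wlt xs ys)

/-- A nonempty word `p` is a Lyndon word if every proper nonempty suffix of `p`
is strictly less than `p`. -/
def IsLyndon {X : Type*} [LinearOrder X] (p : List X) : Prop :=
  p ≠ [] ∧ ∀ u v : List X, u ≠ [] → v ≠ [] → p = u ++ v → wlt v p

/-- `w` is an `(m₁,…,m_r)`-shuffle (block sizes given by the list `l`):
it is strictly increasing on each of the consecutive blocks of sizes `m₁,…,m_r`. -/
def IsShuffle (l : List ℕ) {n : ℕ} (w : Equiv.Perm (Fin n)) : Prop :=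
  ∀ (b : ℕ) (i j : Fin n), (l.take b).sum ≤ (i : ℕ) → (i : ℕ) < (j : ℕ) →
    (j : ℕ) < (l.take (b + 1)).sum → w i < w j

/-!
Tagging every letter with the index of its block shows that the shuffled word is an
interleaving of the words `p₁, …, p₁, …, p_s, …, p_s`, a list of Lyndon words sorted for `≤`.
The concatenation of such a list is the least of its interleavings. While reading it, the
next letter always comes from a suffix `v` of a Lyndon word `L`, and `v ≤ L ≤ u` for every
word `u` still unread. If an interleaving `σ` takes its next letter from such a `u` instead,
that letter is the same (it cannot be smaller), and an exchange argument turns `σ` into an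
interleaving `τ ≤ σ` that takes it from `v`.
-/

section WordOrder

variable {X : Type*} [LinearOrder X]

theorem wlt_irrefl : ∀ u : List X, ¬ wlt u u
  | [] => id
  | x :: u => fun h => h.elim (lt_irrefl x) fun h => wlt_irrefl u h.2

theorem wlt_trans : ∀ {u v w : List X}, wlt u v → wlt v w → wlt u w
  | [], _, _, h, _ | _ :: _, [], _, _, h => h.elim
  | _ :: _, _ :: _, [], _, _ => trivial
  | _ :: _, _ :: _, _ :: _, .inl h₁, .inl h₂ => .inl (h₁.trans h₂)
  | _ :: _, _ :: _, _ :: _, .inl h₁, .inr ⟨rfl, _⟩ => .inl h₁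
  | _ :: _, _ :: _, _ :: _, .inr ⟨rfl, _⟩, .inl h₂ => .inl h₂
  | _ :: _, _ :: _, _ :: _, .inr ⟨rfl, h₁⟩, .inr ⟨rfl, h₂⟩ => .inr ⟨rfl, wlt_trans h₁ h₂⟩

theorem wlt_trichotomous : ∀ u v : List X, wlt u v ∨ u = v ∨ wlt v u
  | [], [] => .inr (.inl rfl)
  | [], _ :: _ => .inr (.inr trivial)
  | _ :: _, [] => .inl trivial
  | x :: u, y :: v => by
    rcases lt_trichotomy x y with h | rfl | h
    · exact .inl (.inl h)
    · rcases wlt_trichotomous u v with h | rfl | h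
      · exact .inl (.inr ⟨rfl, h⟩)
      · exact .inr (.inl rfl)
      · exact .inr (.inr (.inr ⟨rfl, h⟩))
    · exact .inr (.inr (.inl h))

instance : Trans (wlt (X := X)) wlt wlt := ⟨wlt_trans⟩

def wle (u v : List X) : Prop := ¬ wlt v u

theorem wle_refl (u : List X) : wle u u := wlt_irrefl u

theorem wle_of_wlt {u v : List X} (h : wlt u v) : wle u v :=
  fun h' => wlt_irrefl u (wlt_trans h h')

theorem wle_trans {u v w : List X} (h₁ : wle u v) (h₂ : wle v w) : wle u w := by
  intro h
  rcases wlt_trichotomous u v with h' | rfl | h'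
  · exact h₂ (wlt_trans h h')
  · exact h₂ h
  · exact h₁ h'

theorem wle_nil (u : List X) : wle u [] := id

theorem not_wle_nil_cons (x : X) (u : List X) : ¬ wle [] (x :: u) := fun h => h trivial

theorem wle_cons_cons_iff {x : X} {u v : List X} : wle (x :: u) (x :: v) ↔ wle u v := by
  simp [wle, wlt]

theorem wle_append_left_iff (q : List X) {u v : List X} : wle (q ++ u) (q ++ v) ↔ wle u v := by
  induction q with
  | nil => rfl
  | cons x q ih => exact wle_cons_cons_iff.trans ih

theorem le_of_wle_cons {x y : X} {u v : List X} (h : wle (x :: u) (y :: v)) : x ≤ y :=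
  not_lt.mp fun hlt => h (.inl hlt)

theorem wle_of_lt {x y : X} (h : x < y) (u v : List X) : wle (x :: u) (y :: v) :=
  wle_of_wlt (.inl h)

theorem IsLyndon.wle_of_suffix {v L : List X} (hL : IsLyndon L) (hv : v ≠ []) (hs : v <:+ L) :
    wle v L := by
  obtain ⟨_ | ⟨a, u⟩, rfl⟩ := hs
  · exact wle_refl v
  · exact wle_of_wlt (hL.2 (a :: u) v (List.cons_ne_nil a u) hv rfl)

end WordOrder

inductive IsInterleaving {X : Type*} : Multiset (List X) → List X → Prop
  | nil {U : Multiset (List X)} : (∀ u ∈ U, u = []) → IsInterleaving U []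
  | cons {U : Multiset (List X)} {x : X} {xs s : List X} :
      IsInterleaving (xs ::ₘ U) s → IsInterleaving ((x :: xs) ::ₘ U) (x :: s)

namespace IsInterleaving

variable {X : Type*} {U : Multiset (List X)} {s : List X}

theorem cons_iff {x : X} :
    IsInterleaving U (x :: s) ↔ ∃ xs V, U = (x :: xs) ::ₘ V ∧ IsInterleaving (xs ::ₘ V) s :=
  ⟨fun | cons h => ⟨_, _, rfl, h⟩, fun ⟨_, _, hU, h⟩ => hU ▸ cons h⟩

theorem length_eq (h : IsInterleaving U s) : s.length = (U.map List.length).sum := by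
  induction h with
  | nil h => simp [Multiset.map_congr rfl fun u hu => congrArg List.length (h u hu)]
  | cons _ ih => simp [ih, Nat.add_right_comm]

theorem eq_nil_of_zero (h : IsInterleaving 0 s) : s = [] := by
  simpa using h.length_eq

theorem eq_nil_of_mem {u : List X} (h : IsInterleaving U []) (hu : u ∈ U) : u = [] :=
  List.eq_nil_of_length_eq_zero <|
    Multiset.sum_eq_zero_iff.mp h.length_eq.symm _ (Multiset.mem_map_of_mem _ hu)

theorem nil_cons_iff : IsInterleaving ([] ::ₘ U) s ↔ IsInterleaving U s := by
  constructor
  · intro h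
    generalize hV : [] ::ₘ U = V at h
    induction h generalizing U with
    | nil h => exact nil fun u hu => h u (hV ▸ Multiset.mem_cons_of_mem hu)
    | @cons V x xs s _ ih =>
      obtain ⟨W, rfl, rfl⟩ : ∃ W, U = (x :: xs) ::ₘ W ∧ V = [] ::ₘ W := by
        rcases Multiset.cons_eq_cons.mp hV with ⟨h, -⟩ | ⟨-, W, hU, hV⟩
        · exact absurd h.symm (List.cons_ne_nil x xs)
        · exact ⟨W, hU, hV⟩
      exact cons (ih (Multiset.cons_swap _ _ _))
  · intro h
    induction h with
    | nil h => exact nil (by simpa using h)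
    | cons _ ih => exact Multiset.cons_swap .. ▸ cons (Multiset.cons_swap .. ▸ ih)

theorem cons_append {u : List X} (h : IsInterleaving U s) :
    IsInterleaving (u ::ₘ U) (u ++ s) := by
  induction u with
  | nil => exact nil_cons_iff.mpr h
  | cons x u ih => exact cons ih

theorem exists_isInterleaving (U : Multiset (List X)) : ∃ s, IsInterleaving U s :=
  Multiset.induction_on U ⟨[], nil (by simp)⟩ fun u _ ⟨s, h⟩ => ⟨u ++ s, h.cons_append⟩

variable [LinearOrder X]

theorem exchange {q e d : List X} {M : Multiset (List X)} {σ : List X}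
    (h : IsInterleaving ((q ++ e) ::ₘ d ::ₘ M) σ) (hle : wle (q ++ e) (q ++ d)) :
    ∃ τ, IsInterleaving (e ::ₘ (q ++ d) ::ₘ M) τ ∧ wle τ σ := by
  induction σ generalizing q e d M with
  | nil =>
    obtain ⟨rfl, rfl⟩ := List.append_eq_nil_iff.mp (h.eq_nil_of_mem (Multiset.mem_cons_self _ _))
    obtain rfl := h.eq_nil_of_mem (Multiset.mem_cons_of_mem (Multiset.mem_cons_self _ _))
    exact ⟨[], h, wle_refl _⟩
  | cons z σ₀ ih =>
    obtain _ | ⟨q₀, q⟩ := q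
    · exact ⟨_, h, wle_refl _⟩
    obtain ⟨zs, V, hV, h₀⟩ := cons_iff.mp h
    rcases Multiset.cons_eq_cons.mp hV with ⟨hqe, rfl⟩ | ⟨-, W, hdM, rfl⟩
    · obtain ⟨rfl, rfl⟩ := List.cons.inj hqe
      obtain ⟨τ₀, hτ₀, hle₀⟩ := ih h₀ (wle_cons_cons_iff.mp hle)
      exact ⟨_, Multiset.cons_swap .. ▸ cons (Multiset.cons_swap .. ▸ hτ₀),
        wle_cons_cons_iff.mpr hle₀⟩
    rcases Multiset.cons_eq_cons.mp hdM with ⟨rfl, rfl⟩ | ⟨-, M', rfl, rfl⟩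
    · obtain _ | ⟨x, e⟩ := e
      · exact absurd ((wle_append_left_iff _).mp hle) (not_wle_nil_cons _ _)
      rcases (le_of_wle_cons ((wle_append_left_iff _).mp hle)).lt_or_eq with hlt | rfl
      · obtain ⟨τ, hτ⟩ := exists_isInterleaving (e ::ₘ ((q₀ :: q) ++ z :: zs) ::ₘ M)
        exact ⟨x :: τ, cons hτ, wle_of_lt hlt _ _⟩
      -- the common letter `x` joins the common prefix
      have h₀' : IsInterleaving (((q₀ :: q ++ [x]) ++ e) ::ₘ zs ::ₘ M) σ₀ := by
        simpa [Multiset.cons_swap zs] using h₀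
      have hle' : wle ((q₀ :: q ++ [x]) ++ e) ((q₀ :: q ++ [x]) ++ zs) := by simpa using hle
      obtain ⟨τ₀, hτ₀, hle₀⟩ := ih h₀' hle'
      exact ⟨x :: τ₀, cons (by simpa using hτ₀), wle_cons_cons_iff.mpr hle₀⟩
    · obtain ⟨τ₀, hτ₀, hle₀⟩ := ih (M := zs ::ₘ M')
        (by simpa only [Multiset.cons_swap] using h₀) hle
      have hτ : IsInterleaving ((z :: zs) ::ₘ e ::ₘ (q₀ :: q ++ d) ::ₘ M') (z :: τ₀) :=
        cons (by simpa only [Multiset.cons_swap] using hτ₀)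
      exact ⟨z :: τ₀, by simpa only [Multiset.cons_swap] using hτ, wle_cons_cons_iff.mpr hle₀⟩

end IsInterleaving

section Lyndon

variable {X : Type*} [LinearOrder X]

open IsInterleaving in
theorem append_flatten_wle_of_isInterleaving {L : List X} {A : List (List X)}
    (hL : IsLyndon L) (hLA : ∀ p ∈ A, wle L p)
    (hA : ∀ τ, IsInterleaving ↑A τ → wle A.flatten τ) :
    ∀ {v σ : List X}, v <:+ L → IsInterleaving (v ::ₘ ↑A) σ → wle (v ++ A.flatten) σ
  | [], _, _, h => hA _ (nil_cons_iff.mp h)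
  | _ :: _, [], _, _ => wle_nil _
  | x :: v, z :: σ, hv, h => by
    obtain ⟨zs, V, hV, h₀⟩ := cons_iff.mp h
    have hv' : v <:+ L := (List.suffix_cons x v).trans hv
    have hxv : ∀ u ∈ A, wle (x :: v) u := fun u hu =>
      wle_trans (hL.wle_of_suffix (List.cons_ne_nil x v) hv) (hLA u hu)
    rcases Multiset.cons_eq_cons.mp hV with ⟨hxz, rfl⟩ | ⟨-, W, hAW, rfl⟩
    · obtain ⟨rfl, rfl⟩ := List.cons.inj hxz
      exact wle_cons_cons_iff.mpr (append_flatten_wle_of_isInterleaving hL hLA hA hv' h₀)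
    have hzA : z :: zs ∈ A := by
      rw [← Multiset.mem_coe, hAW]
      exact Multiset.mem_cons_self _ _
    rcases (le_of_wle_cons (hxv _ hzA)).lt_or_eq with hlt | rfl
    · exact wle_of_lt hlt _ _
    obtain ⟨τ, hτ, hτσ⟩ := exchange (q := [x]) (by rwa [Multiset.cons_swap] at h₀) (hxv _ hzA)
    rw [List.singleton_append, ← hAW] at hτ
    exact wle_cons_cons_iff.mpr
      (wle_trans (append_flatten_wle_of_isInterleaving hL hLA hA hv' hτ) hτσ)

theorem flatten_wle_of_isInterleaving {A : List (List X)} (hA : ∀ p ∈ A, IsLyndon p)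
    (hsorted : A.Pairwise wle) {σ : List X} (h : IsInterleaving ↑A σ) : wle A.flatten σ := by
  induction A generalizing σ with
  | nil => rw [h.eq_nil_of_zero]; exact wle_refl _
  | cons B A ih =>
    rw [List.pairwise_cons] at hsorted
    exact append_flatten_wle_of_isInterleaving (hA B List.mem_cons_self) hsorted.1
      (fun τ hτ => ih (fun p hp => hA p (List.mem_cons_of_mem B hp)) hsorted.2 hτ)
      List.suffix_rfl h

end Lyndon

theorem Equiv.Perm.filter_ofFn_comp_symm {α : Type*} {n : ℕ} (σ : Equiv.Perm (Fin n))
    (f : Fin n → α) {p : α → Bool} (hσ : StrictMonoOn σ {i | p (f i)}) :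
    (List.ofFn (f ∘ σ.symm)).filter p = (List.ofFn f).filter p := by
  have hsorted : (((List.finRange n).map σ.symm).filter (p ∘ f)).Pairwise (· < ·) :=
    List.pairwise_filter.mpr <| List.pairwise_map.mpr <| (List.pairwise_lt_finRange n).imp
      fun hij hi hj => (hσ.lt_iff_lt hi hj).mp (by simpa using hij)
  have hfilter : ((List.finRange n).map σ.symm).filter (p ∘ f) =
      (List.finRange n).filter (p ∘ f) :=
    List.Perm.eq_of_pairwise (fun _ _ _ _ h h' => absurd h' h.asymm) hsorted
      ((List.pairwise_lt_finRange n).filter _) ((Equiv.Perm.map_finRange_perm σ.symm).filter _)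
  rw [List.ofFn_eq_map, List.ofFn_eq_map, ← List.map_map, List.filter_map, hfilter,
    ← List.filter_map]

theorem IsShuffle.strictMonoOn {l : List ℕ} {n : ℕ} {w : Equiv.Perm (Fin n)}
    (hw : IsShuffle l w) (b : ℕ) :
    StrictMonoOn w {i | (l.take b).sum ≤ i ∧ i < (l.take (b + 1)).sum} :=
  fun _ hi _ hj hij => hw b _ _ hi.1 hij hj.2

theorem Multiset.map_range_getD {α : Type*} (l : List α) (d : α) :
    (Multiset.range l.length).map (l.getD · d) = l := by
  rw [← Multiset.coe_range, Multiset.map_coe]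
  exact congrArg _ (List.ext_getElem (by simp) fun i _ h => by simp [h])

section Tagging

variable {X : Type*}

def taggedFlatten : List (List X) → List (ℕ × X)
  | [] => []
  | f :: fs => f.map (0, ·) ++ (taggedFlatten fs).map (Prod.map Nat.succ id)

@[simp]
theorem map_snd_taggedFlatten (fs : List (List X)) :
    (taggedFlatten fs).map Prod.snd = fs.flatten := by
  induction fs with
  | nil => rfl
  | cons f fs ih => simp [taggedFlatten, ← ih, Function.comp_def]

theorem map_snd_filter_taggedFlatten (fs : List (List X)) (b : ℕ) :
    ((taggedFlatten fs).filter (·.1 = b)).map Prod.snd = fs.getD b [] := by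
  induction fs generalizing b with
  | nil => rfl
  | cons f fs ih =>
    cases b with
    | zero => simp [taggedFlatten, List.filter_map, Function.comp_def]
    | succ b => simpa [taggedFlatten, List.filter_map, Function.comp_def] using ih b

theorem fst_lt_of_mem_taggedFlatten {fs : List (List X)} {p : ℕ × X}
    (hp : p ∈ taggedFlatten fs) : p.1 < fs.length := by
  induction fs generalizing p with
  | nil => simp [taggedFlatten] at hp
  | cons f fs ih =>
    simp only [taggedFlatten, List.mem_append, List.mem_map] at hp
    rcases hp with ⟨_, _, rfl⟩ | ⟨q, hq, rfl⟩
    · simp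
    · simpa using ih hq

theorem sum_take_le_and_lt_sum_take_of_taggedFlatten {fs : List (List X)} {i b : ℕ}
    (hi : i < (taggedFlatten fs).length) (hb : (taggedFlatten fs)[i].1 = b) :
    ((fs.map List.length).take b).sum ≤ i ∧ i < ((fs.map List.length).take (b + 1)).sum := by
  induction fs generalizing i b with
  | nil => simp [taggedFlatten] at hi
  | cons f fs ih =>
    simp only [taggedFlatten, List.getElem_append, List.length_append, List.length_map] at hb hi
    split_ifs at hb with hif
    · obtain rfl : 0 = b := by simpa using hb
      simpa using hif
    · have hb' : (taggedFlatten fs)[i - f.length].1 + 1 = b := by simpa using hb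
      have := ih (i := i - f.length) (by omega) rfl
      simp only [← hb', List.map_cons, List.take_succ_cons, List.sum_cons]
      omega

end Tagging

section Shuffle

variable {X : Type*}

open IsInterleaving in
theorem isInterleaving_map_filter_fst_eq (t : List (ℕ × X)) {R : ℕ} (ht : ∀ p ∈ t, p.1 < R) :
    IsInterleaving ((Multiset.range R).map fun b => (t.filter (·.1 = b)).map Prod.snd)
      (t.map Prod.snd) := by
  induction t with
  | nil => exact nil fun _ hu => by simpa using Multiset.eq_of_mem_replicate (by simpa using hu)
  | cons p t ih =>
    have hp : p.1 ∈ Multiset.range R := Multiset.mem_range.mpr (ht p List.mem_cons_self)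
    have hrest : ∀ b ∈ (Multiset.range R).erase p.1,
        ((p :: t).filter (·.1 = b)).map Prod.snd = (t.filter (·.1 = b)).map Prod.snd := by
      intro b hb
      have : p.1 ≠ b := fun h => by
        simp [h, Multiset.Nodup.mem_erase_iff (Multiset.nodup_range R)] at hb
      simp [this]
    have ih' := ih fun q hq => ht q (List.mem_cons_of_mem p hq)
    rw [← Multiset.cons_erase hp, Multiset.map_cons] at ih'
    rw [← Multiset.cons_erase hp, Multiset.map_cons, Multiset.map_congr rfl hrest]
    simpa using cons ih'

theorem IsShuffle.isInterleaving {fs : List (List X)} {w : Equiv.Perm (Fin fs.flatten.length)}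
    (hw : IsShuffle (fs.map List.length) w) :
    IsInterleaving ↑fs (List.ofFn fun j => fs.flatten.get (w.symm j)) := by
  have hT : (taggedFlatten fs).length = fs.flatten.length := by
    rw [← map_snd_taggedFlatten, List.length_map]
  let f : Fin fs.flatten.length → ℕ × X := fun i => (taggedFlatten fs)[i.1]
  have hTf : List.ofFn f = taggedFlatten fs := List.ext_getElem (by simp [hT]) (by simp [f])
  have hblock (b : ℕ) : (List.ofFn (f ∘ w.symm)).filter (·.1 = b) =
      (taggedFlatten fs).filter (·.1 = b) := by
    rw [w.filter_ofFn_comp_symm f (p := (·.1 = b)) ((hw.strictMonoOn b).mono fun i hi =>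
      sum_take_le_and_lt_sum_take_of_taggedFlatten _ (of_decide_eq_true hi)), hTf]
  have hword : List.ofFn (fun j => fs.flatten.get (w.symm j)) =
      (List.ofFn (f ∘ w.symm)).map Prod.snd := by
    rw [List.map_ofFn]
    congr 1
    funext j
    simp only [Function.comp_apply, f, List.get_eq_getElem]
    rw [← List.getElem_map Prod.snd]
    exact List.getElem_of_eq (map_snd_taggedFlatten fs).symm _
  have htags : ∀ p ∈ List.ofFn (f ∘ w.symm), p.1 < fs.length := fun p hp => by
    obtain ⟨j, rfl⟩ := List.mem_ofFn.mp hp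
    exact fst_lt_of_mem_taggedFlatten (List.getElem_mem _)
  rw [hword]
  simpa only [hblock, map_snd_filter_taggedFlatten, Multiset.map_range_getD] using
    isInterleaving_map_filter_fst_eq _ htags

end Shuffle
theorem List.Pairwise.zip_left {α β : Type*} {R : α → α → Prop} {l₁ : List α}
    (h : l₁.Pairwise R) (l₂ : List β) : (l₁.zip l₂).Pairwise fun a b => R a.1 b.1 := by
  induction l₁ generalizing l₂ with
  | nil => simp
  | cons a l₁ ih =>
    obtain _ | ⟨b, l₂⟩ := l₂
    · simp
    rw [List.pairwise_cons] at h
    exact List.pairwise_cons.mpr ⟨fun p hp => h.1 _ (List.of_mem_zip hp).1, ih h.2 l₂⟩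

theorem List.Pairwise.flatMap_replicate {α : Type*} {R : α → α → Prop} (hR : ∀ a, R a a)
    {l : List (α × ℕ)} (h : l.Pairwise fun a b => R a.1 b.1) :
    (l.flatMap fun pn => List.replicate pn.2 pn.1).Pairwise R :=
  List.pairwise_flatMap.mpr ⟨fun _ _ => List.pairwise_replicate.mpr (.inr (hR _)),
    h.imp fun hab _ hx _ hy => List.eq_of_mem_replicate hx ▸ List.eq_of_mem_replicate hy ▸ hab⟩

theorem shuffle_ge_of_lyndon_factorization_general {X : Type*} [LinearOrder X]
    (ps : List (List X)) (ns : List ℕ)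
    (hly : ∀ p ∈ ps, IsLyndon p)
    (hsorted : ps.Chain' wlt)
    (fs : List (List X))
    (hfs : fs = (ps.zip ns).flatMap fun pn => List.replicate pn.2 pn.1)
    (w : Equiv.Perm (Fin fs.flatten.length))
    (hw : IsShuffle (fs.map List.length) w) :
    ¬ wlt (List.ofFn fun j => fs.flatten.get (w.symm j)) fs.flatten := by
  have hfs_sorted : fs.Pairwise wle :=
    hfs ▸ ((hsorted.pairwise.imp wle_of_wlt).zip_left ns).flatMap_replicate wle_refl
  have hfs_lyndon : ∀ p ∈ fs, IsLyndon p := by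
    intro p hp
    obtain ⟨pn, hpn, hp⟩ := List.mem_flatMap.mp (hfs ▸ hp)
    exact List.eq_of_mem_replicate hp ▸ hly _ (List.of_mem_zip hpn).1
  exact flatten_wle_of_isInterleaving hfs_lyndon hfs_sorted hw.isInterleaving

/-- If `a = p₁^{n₁} ⋯ p_s^{n_s}` with `p₁ < ⋯ < p_s` Lyndon words of lengths
`l₁,…,l_s`, and `w` is a shuffle for the block sizes `(l₁,…,l₁,…,l_s,…,l_s)`
(each `lᵢ` repeated `nᵢ` times), then the word obtained by placing the letter
`aᵢ` in position `w(i)` is lexicographically greater than or equal to `a`. -/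
theorem shuffle_ge_of_lyndon_factorization {X : Type*} [LinearOrder X]
    (ps : List (List X)) (ns : List ℕ)
    (hly : ∀ p ∈ ps, IsLyndon p)
    (hsorted : ps.Chain' wlt)
    (hpos : ∀ n ∈ ns, 0 < n)
    (hlen : ns.length = ps.length)
    (fs : List (List X))
    (hfs : fs = (ps.zip ns).flatMap fun pn => List.replicate pn.2 pn.1)
    (w : Equiv.Perm (Fin fs.flatten.length))
    (hw : IsShuffle (fs.map List.length) w) :
    ¬ wlt (List.ofFn fun j => fs.flatten.get (w.symm j)) fs.flatten :=
  shuffle_ge_of_lyndon_factorization_general ps ns hly hsorted fs hfs w hw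
end

section
/- For the q-shuffle power of a single Lyndon word: the sum over braid-group lifts of the block permutations of n copies of p (each lift acting on v_{p^n} via the diagonal braiding) equals the q-factorial [n]_Q! times v_{p^n}, where Q = Π_{k,l=1}^{L} q_{x_k x_l} and [n]_Q! = Π_{j=1}^{n} (1 + Q + ⋯ + Q^{j−1}). -/
/-- Action on `V^{⊗n}` (modelled as the free module on words of length `n`)
of the Matsumoto lift `T_w` of a permutation `w`, for the diagonal braiding
`σ(e_i ⊗ e_j) = q_{ij} (e_j ⊗ e_i)`: the basis word `a` is sent to the
permuted word `a ∘ w⁻¹`, multiplied by the product of `q_{a_i a_j}` over all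
inversions of `w`. -/
noncomputable def Tw {k : Type*} [Field k] {X : Type*} (q : X → X → k)
    {n : ℕ} (w : Equiv.Perm (Fin n)) (a : Fin n → X) : (Fin n → X) →₀ k :=
  (∏ ij : Fin n × Fin n,
      if (ij.1 : ℕ) < (ij.2 : ℕ) ∧ w ij.2 < w ij.1 then q (a ij.1) (a ij.2)
      else 1) •
    Finsupp.single (a ∘ ⇑w.symm) 1

/-!
The block permutation of `τ` fixes the periodic word `p^m`, and its inversions are the pairs
(letter `s` of block `b`, letter `t` of block `c`) with `(b, c)` an inversion of `τ` and `s, t`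
arbitrary. Hence its lift acts on `v_{p^m}` by `Q ^ inv τ`, and the sum is the Mahonian
generating function `∑_τ Q ^ inv τ = [m]_Q!`: writing a permutation of `Fin (m + 1)` as its
value `p` at `0` followed by a permutation of the remaining values adds exactly `p` inversions.
-/

open Finset Equiv

lemma Fin.card_filter_castSucc_lt {n : ℕ} (p : Fin (n + 1)) :
    #{i : Fin n | i.castSucc < p} = p := by
  rw [← card_map Fin.castSuccEmb, ← Fin.card_Iio p]
  congr 1
  ext j
  simp only [mem_map, mem_filter, mem_univ, true_and, Fin.coe_castSuccEmb, mem_Iio]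
  constructor
  · rintro ⟨i, hi, rfl⟩
    exact hi
  · intro hj
    exact ⟨j.castPred (Fin.ne_last_of_lt hj), by simpa using hj, by simp⟩

namespace Equiv.Perm

def inversions {n : ℕ} (σ : Perm (Fin n)) : Finset (Fin n × Fin n) :=
  {ij | ij.1 < ij.2 ∧ σ ij.2 < σ ij.1}

@[simp] lemma mem_inversions {n : ℕ} {σ : Perm (Fin n)} {ij : Fin n × Fin n} :
    ij ∈ σ.inversions ↔ ij.1 < ij.2 ∧ σ ij.2 < σ ij.1 := by
  simp [inversions]

noncomputable def consSuccAbove {n : ℕ} (p : Fin (n + 1)) (e : Perm (Fin n)) :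
    Perm (Fin (n + 1)) :=
  .ofBijective (Fin.cons p (p.succAbove ∘ e)) <| Finite.injective_iff_bijective.mp <|
    Fin.cons_injective_iff.mpr
      ⟨fun ⟨i, hi⟩ ↦ Fin.succAbove_ne p (e i) hi,
        Fin.succAbove_right_injective.comp e.injective⟩

@[simp] lemma consSuccAbove_zero {n : ℕ} (p : Fin (n + 1)) (e : Perm (Fin n)) :
    consSuccAbove p e 0 = p := rfl

@[simp] lemma consSuccAbove_succ {n : ℕ} (p : Fin (n + 1)) (e : Perm (Fin n)) (i : Fin n) :
    consSuccAbove p e i.succ = p.succAbove (e i) := rfl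

lemma bijective_consSuccAbove (n : ℕ) :
    Function.Bijective fun pe : Fin (n + 1) × Perm (Fin n) ↦ consSuccAbove pe.1 pe.2 := by
  refine (Fintype.bijective_iff_injective_and_card _).mpr
    ⟨?_, by simp [Fintype.card_perm, Nat.factorial_succ]⟩
  rintro ⟨p, e⟩ ⟨p', e'⟩ h
  obtain rfl : p = p' := by simpa using congr($h 0)
  refine Prod.ext rfl (Equiv.ext fun i ↦ Fin.succAbove_right_injective (p := p) ?_)
  simpa using congr($h i.succ)

lemma card_inversions_consSuccAbove {n : ℕ} (p : Fin (n + 1)) (e : Perm (Fin n)) :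
    #(consSuccAbove p e).inversions = p + #e.inversions := by
  have : (consSuccAbove p e).inversions =
      ({i | (e i).castSucc < p} : Finset (Fin n)).map
          ((Fin.succEmb n).trans (Function.Embedding.sectR 0 _)) ∪
        e.inversions.map ((Fin.succEmb n).prodMap (Fin.succEmb n)) := by
    ext ⟨i, j⟩
    cases i using Fin.cases <;> cases j using Fin.cases <;>
      simp [Fin.succAbove_lt_iff_castSucc_lt, Fin.succAbove_lt_succAbove_iff, Fin.succ_pos,
        (Fin.succ_ne_zero _).symm]
  rw [this, card_union_of_disjoint, card_map, card_map, ← Fin.card_filter_castSucc_lt p]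
  · exact congrArg (· + _) (card_equiv e (by simp))
  · simp [disjoint_left]

theorem sum_pow_card_inversions {R : Type*} [CommSemiring R] (Q : R) (m : ℕ) :
    ∑ σ : Perm (Fin m), Q ^ #σ.inversions =
      ∏ j ∈ range m, ∑ i ∈ range (j + 1), Q ^ i := by
  induction m with
  | zero => simp [inversions]
  | succ n ih =>
    rw [← (bijective_consSuccAbove n).sum_comp, Fintype.sum_prod_type, prod_range_succ, ← ih,
      mul_comm, sum_mul_sum]
    simp only [card_inversions_consSuccAbove, pow_add]
    exact Fin.sum_univ_eq_sum_range (fun i ↦ ∑ σ : Perm (Fin n), Q ^ i * Q ^ #σ.inversions) _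

end Equiv.Perm

lemma finProdFinEquiv_lt_finProdFinEquiv_iff {m n : ℕ} {b c : Fin m} {s t : Fin n} :
    finProdFinEquiv (b, s) < finProdFinEquiv (c, t) ↔ b < c ∨ b = c ∧ s < t := by
  simp only [Fin.lt_def, finProdFinEquiv_apply_val, Fin.ext_iff]
  rcases lt_trichotomy (b : ℕ) c with h | h | h
  · have : n * b + n ≤ n * c := by nlinarith
    omega
  · simp [h]
  · have : n * c + n ≤ n * b := by nlinarith
    omega

-- `finProdFinEquiv (b, s) = s + L * b` is the position of letter `s` of block `b`.
def blockPerm {m : ℕ} (L : ℕ) (τ : Perm (Fin m)) : Perm (Fin (m * L)) :=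
  finProdFinEquiv.permCongr (τ.prodCongr (.refl _))

@[simp] lemma blockPerm_finProdFinEquiv {m L : ℕ} (τ : Perm (Fin m)) (b : Fin m) (s : Fin L) :
    blockPerm L τ (finProdFinEquiv (b, s)) = finProdFinEquiv (τ b, s) := by
  simp [blockPerm, permCongr_apply]

lemma val_blockPerm {m L : ℕ} (τ : Perm (Fin m)) (i : Fin (m * L)) :
    (blockPerm L τ i : ℕ) = τ i.divNat * L + i % L := by
  simp [blockPerm, permCongr_apply, Nat.add_comm, Nat.mul_comm]

lemma comp_blockPerm_symm {X : Type*} {m L : ℕ} (p : Fin L → X) (τ : Perm (Fin m)) :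
    (p ∘ Prod.snd ∘ finProdFinEquiv.symm) ∘ (blockPerm L τ).symm =
      p ∘ Prod.snd ∘ finProdFinEquiv.symm := by
  ext i
  simp [blockPerm, permCongr_def]

lemma mem_inversions_blockPerm {m L : ℕ} {τ : Perm (Fin m)} {b c : Fin m} {s t : Fin L} :
    (finProdFinEquiv (b, s), finProdFinEquiv (c, t)) ∈ (blockPerm L τ).inversions ↔
      (b, c) ∈ τ.inversions := by
  simp only [Perm.mem_inversions, blockPerm_finProdFinEquiv,
    finProdFinEquiv_lt_finProdFinEquiv_iff]
  by_cases hbc : b = c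
  · subst hbc
    simpa using fun h ↦ h.le
  · have : τ c ≠ τ b := fun h ↦ hbc (τ.injective h).symm
    simp [hbc, this]

lemma prod_inversions_blockPerm {M : Type*} [CommMonoid M] {m L : ℕ} (τ : Perm (Fin m))
    (g : Fin (m * L) × Fin (m * L) → M) :
    ∏ ij ∈ (blockPerm L τ).inversions, g ij =
      ∏ bc ∈ τ.inversions, ∏ s, ∏ t,
        g (finProdFinEquiv (bc.1, s), finProdFinEquiv (bc.2, t)) := by
  rw [← prod_ite_mem_eq, ← (finProdFinEquiv.prodCongr finProdFinEquiv).prod_comp]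
  conv_rhs => rw [← prod_ite_mem_eq]
  simp only [prodCongr_apply, Prod.map, mem_inversions_blockPerm, Fintype.prod_prod_type]
  refine prod_congr rfl fun b _ ↦ ?_
  rw [prod_comm]
  simp only [prod_ite_irrel, prod_const_one]

lemma Tw_eq_prod_inversions_smul {k X : Type*} [Field k] (q : X → X → k) {n : ℕ}
    (w : Perm (Fin n)) (a : Fin n → X) :
    Tw q w a =
      (∏ ij ∈ w.inversions, q (a ij.1) (a ij.2)) • Finsupp.single (a ∘ w.symm) 1 := by
  simp [Tw, Perm.inversions, prod_filter]

lemma Tw_blockPerm {k X : Type*} [Field k] (q : X → X → k) {m L : ℕ} (p : Fin L → X)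
    (τ : Perm (Fin m)) :
    Tw q (blockPerm L τ) (p ∘ Prod.snd ∘ finProdFinEquiv.symm) =
      (∏ s, ∏ t, q (p s) (p t)) ^ #τ.inversions •
        Finsupp.single (p ∘ Prod.snd ∘ finProdFinEquiv.symm) 1 := by
  rw [Tw_eq_prod_inversions_smul, comp_blockPerm_symm, prod_inversions_blockPerm]
  simp

theorem sum_blockPerms_eq_qFactorial_smul_general {k X : Type*} [Field k]
    (q : X → X → k)
    (L m : ℕ) (hL : 0 < L) (p : Fin L → X)
    (a : Fin (m * L) → X)
    (ha : a = fun i : Fin (m * L) => p ⟨(i : ℕ) % L, Nat.mod_lt _ hL⟩)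
    (W : Equiv.Perm (Fin m) → Equiv.Perm (Fin (m * L)))
    (hW : ∀ (τ : Equiv.Perm (Fin m)) (i : Fin (m * L)),
      ((W τ) i : ℕ) =
        (τ ⟨(i : ℕ) / L, (Nat.div_lt_iff_lt_mul hL).mpr i.isLt⟩ : ℕ) * L +
          (i : ℕ) % L) :
    ∑ τ : Equiv.Perm (Fin m), Tw q (W τ) a =
      (∏ j ∈ Finset.range m,
          ∑ i ∈ Finset.range (j + 1),
            (∏ s : Fin L, ∏ t : Fin L, q (p s) (p t)) ^ i) •
        Finsupp.single a 1 := by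
  obtain rfl : W = blockPerm L :=
    funext fun τ ↦ Equiv.ext fun i ↦ Fin.ext <| (hW τ i).trans (val_blockPerm τ i).symm
  obtain rfl : a = p ∘ Prod.snd ∘ finProdFinEquiv.symm := ha
  simp only [Tw_blockPerm, ← sum_smul, Perm.sum_pow_card_inversions]

/-- The sum over all braid-group lifts of block permutations of `m` copies of a
word `p = x₁⋯x_L` (each acting on `v_{p^m}` via the diagonal braiding) equals
`[m]_Q! • v_{p^m}`, where `Q = Π_{k,l=1}^{L} q_{x_k x_l}` and
`[m]_Q! = Π_{j=1}^{m} (1 + Q + ⋯ + Q^{j-1})`. -/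
theorem sum_blockPerms_eq_qFactorial_smul {k X : Type*} [Field k]
    (q : X → X → k) (hq : ∀ i j, q i j ≠ 0)
    (L m : ℕ) (hL : 0 < L) (p : Fin L → X)
    (a : Fin (m * L) → X)
    (ha : a = fun i : Fin (m * L) => p ⟨(i : ℕ) % L, Nat.mod_lt _ hL⟩)
    (W : Equiv.Perm (Fin m) → Equiv.Perm (Fin (m * L)))
    (hW : ∀ (τ : Equiv.Perm (Fin m)) (i : Fin (m * L)),
      ((W τ) i : ℕ) =
        (τ ⟨(i : ℕ) / L, (Nat.div_lt_iff_lt_mul hL).mpr i.isLt⟩ : ℕ) * L +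
          (i : ℕ) % L) :
    ∑ τ : Equiv.Perm (Fin m), Tw q (W τ) a =
      (∏ j ∈ Finset.range m,
          ∑ i ∈ Finset.range (j + 1),
            (∏ s : Fin L, ∏ t : Fin L, q (p s) (p t)) ^ i) •
        Finsupp.single a 1 :=
  sum_blockPerms_eq_qFactorial_smul_general q L m hL p a ha W hW
end
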